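/- Let $n \ge 2$ and $0 < s < 1$. Define $G(\varepsilon) = \int_{1-\varepsilon}^1 \int_{\sqrt{1-t^2}}^{\sqrt{\varepsilon(2-\varepsilon)}} \frac{\rho^{n-2}}{(\rho^2 - (1-t^2))^s}\, d\rho\, dt$ for $0 < \varepsilon < 1$. Then there exist constants $0 < c_1 \le c_2$ and $\varepsilon_0 > 0$ such that $c_1\, \varepsilon^{\frac{n+1}{2}-s} \le G(\varepsilon) \le c_2\, \varepsilon^{\frac{n+1}{2}-s}$ for $0 < \varepsilon < \varepsilon_0$. -/

import Mathlib

open MeasureTheory Real intervalIntegral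

noncomputable def knappG (n : ℕ) (s ε : ℝ) : ℝ :=
  ∫ t in (1 - ε)..1, ∫ ρ in Real.sqrt (1 - t ^ 2)..Real.sqrt (ε * (2 - ε)),
    ρ ^ (n - 2) / (ρ ^ 2 - (1 - t ^ 2)) ^ s

/-!
Write `a = √(1 - t²)` and `R = √(ε(2 - ε))`, so that `R ≤ √(2ε)`. Since `ρ² - a² ≥ a(ρ - a)`,
the inner integrand is at most `R^(n-2) a^(-s) (ρ - a)^(-s)`, whose `ρ`-integral is at most
`R^(n-1-s) (1 - t)^(-s/2) / (1 - s)`; integrating in `t` over an interval of length `ε` gives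
the upper bound. Conversely, for `t > 1 - ε/2` we have `a < √ε`, and on `√ε ≤ ρ ≤ 5√ε/4 ≤ R`
the integrand is at least `√ε^(n-2) (25ε/16)^(-s)`; this box of area `ε/2 · √ε/4` gives the
lower bound.
-/

open Set

lemma stronglyMeasurable_intervalIntegral_of_measurable {F : ℝ → ℝ → ℝ}
    (hF : Measurable (Function.uncurry F)) {u v : ℝ → ℝ} (hu : Measurable u)
    (hv : Measurable v) : StronglyMeasurable fun t => ∫ ρ in u t..v t, F t ρ := by
  have key : ∀ {u v : ℝ → ℝ}, Measurable u → Measurable v →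
      StronglyMeasurable fun t => ∫ ρ in Ioc (u t) (v t), F t ρ := by
    intro u v hu hv
    have hS : MeasurableSet {q : ℝ × ℝ | q.2 ∈ Ioc (u q.1) (v q.1)} :=
      (measurableSet_lt (hu.comp measurable_fst) measurable_snd).inter
        (measurableSet_le measurable_snd (hv.comp measurable_fst))
    have h := (hF.indicator hS).stronglyMeasurable.integral_prod_right' (ν := volume)
    convert h using 2 with t
    rw [← MeasureTheory.integral_indicator measurableSet_Ioc]
    rfl
  exact (key hu hv).sub (key hv hu)

lemma rpow_eq_sqrt_pow {ε : ℝ} (hε : 0 ≤ ε) (k : ℕ) : ε ^ ((k : ℝ) / 2) = √ε ^ k := by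
  rw [sqrt_eq_rpow, ← rpow_natCast, ← rpow_mul hε, one_div_mul_eq_div]

section Kernel

variable {m : ℕ} {s a b c d ρ : ℝ}

lemma intervalIntegrable_sub_rpow_neg (hs : s < 1) :
    IntervalIntegrable (fun ρ => (ρ - a) ^ (-s)) volume a b := by
  simpa using (intervalIntegrable_rpow' (a := 0) (b := b - a) (by linarith)).comp_sub_right a

lemma integral_sub_rpow_neg (hs : s < 1) :
    ∫ ρ in a..b, (ρ - a) ^ (-s) = (b - a) ^ (1 - s) / (1 - s) := by
  rw [integral_comp_sub_right (fun x : ℝ => x ^ (-s)), integral_rpow (Or.inl (by linarith)),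
    sub_self, zero_rpow (by linarith), neg_add_eq_sub, sub_zero]

lemma intervalIntegrable_rsub_rpow_neg (hs : s < 1) :
    IntervalIntegrable (fun x => (b - x) ^ (-s)) volume a b := by
  simpa using ((intervalIntegrable_rpow' (a := 0) (b := b - a) (by linarith)).comp_sub_left b).symm

lemma integral_rsub_rpow_neg (hs : s < 1) :
    ∫ x in a..b, (b - x) ^ (-s) = (b - a) ^ (1 - s) / (1 - s) := by
  rw [integral_comp_sub_left (fun x : ℝ => x ^ (-s)), integral_rpow (Or.inl (by linarith)),
    sub_self, zero_rpow (by linarith), neg_add_eq_sub, sub_zero]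

lemma kernel_le (hs : 0 < s) (ha : 0 < a) (haρ : a ≤ ρ) (hρb : ρ ≤ b) :
    ρ ^ m / (ρ ^ 2 - a ^ 2) ^ s ≤ b ^ m * a ^ (-s) * (ρ - a) ^ (-s) := by
  rcases haρ.eq_or_lt with rfl | haρ
  · simp [zero_rpow hs.ne', zero_rpow (neg_ne_zero.2 hs.ne')]
  have hρa : 0 < ρ - a := sub_pos.2 haρ
  calc ρ ^ m / (ρ ^ 2 - a ^ 2) ^ s ≤ b ^ m / ((ρ - a) * a) ^ s := by
        apply div_le_div₀ (pow_nonneg (by linarith) _) (by gcongr; linarith) (by positivity)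
        exact rpow_le_rpow (by positivity) (by nlinarith) hs.le
    _ = b ^ m * a ^ (-s) * (ρ - a) ^ (-s) := by
        rw [mul_rpow hρa.le ha.le, rpow_neg ha.le, rpow_neg hρa.le]
        ring

lemma kernel_nonneg (ha : 0 ≤ a) (haρ : a ≤ ρ) : 0 ≤ ρ ^ m / (ρ ^ 2 - a ^ 2) ^ s := by
  have : 0 ≤ ρ ^ 2 - a ^ 2 := by nlinarith
  exact div_nonneg (pow_nonneg (ha.trans haρ) _) (rpow_nonneg this _)

lemma intervalIntegrable_kernel (hs0 : 0 < s) (hs1 : s < 1) (ha : 0 < a) (hab : a ≤ b) :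
    IntervalIntegrable (fun ρ => ρ ^ m / (ρ ^ 2 - a ^ 2) ^ s) volume a b := by
  refine ((intervalIntegrable_sub_rpow_neg hs1).const_mul (b ^ m * a ^ (-s))).mono_fun'
    (Measurable.aestronglyMeasurable (by fun_prop)) ?_
  rw [uIoc_of_le hab]
  refine (ae_restrict_iff' measurableSet_Ioc).2 (.of_forall fun ρ hρ => ?_)
  dsimp only
  rw [norm_of_nonneg (kernel_nonneg ha.le hρ.1.le)]
  exact kernel_le hs0 ha hρ.1.le hρ.2

lemma integral_kernel_le (hs0 : 0 < s) (hs1 : s < 1) (ha : 0 < a) (hab : a ≤ b) :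
    ∫ ρ in a..b, ρ ^ m / (ρ ^ 2 - a ^ 2) ^ s
      ≤ b ^ m * a ^ (-s) * ((b - a) ^ (1 - s) / (1 - s)) := by
  rw [← integral_sub_rpow_neg hs1, ← intervalIntegral.integral_const_mul]
  exact integral_mono_on hab (intervalIntegrable_kernel hs0 hs1 ha hab)
    ((intervalIntegrable_sub_rpow_neg hs1).const_mul _)
    fun ρ hρ => kernel_le hs0 ha hρ.1 hρ.2

lemma le_integral_kernel (hs0 : 0 < s) (hs1 : s < 1) (ha : 0 < a) (hac : a < c) (hcd : c ≤ d)
    (hdb : d ≤ b) :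
    (d - c) * (c ^ m / (d ^ 2) ^ s) ≤ ∫ ρ in a..b, ρ ^ m / (ρ ^ 2 - a ^ 2) ^ s := by
  have hab : a ≤ b := by linarith
  have hint := intervalIntegrable_kernel (m := m) hs0 hs1 ha hab
  calc (d - c) * (c ^ m / (d ^ 2) ^ s) = ∫ _ in c..d, c ^ m / (d ^ 2) ^ s := by
        simp [mul_div_assoc]
    _ ≤ ∫ ρ in c..d, ρ ^ m / (ρ ^ 2 - a ^ 2) ^ s := by
        refine integral_mono_on hcd intervalIntegrable_const
          (hint.mono_set (by rw [uIcc_of_le hcd, uIcc_of_le hab]; gcongr)) fun ρ hρ => ?_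
        have hρa : 0 < ρ ^ 2 - a ^ 2 := by nlinarith [hρ.1]
        apply div_le_div₀ (pow_nonneg (by linarith [hρ.1]) _)
          (by gcongr; exacts [by linarith, hρ.1]) (rpow_pos_of_pos hρa s)
        exact rpow_le_rpow hρa.le (by nlinarith [hρ.1, hρ.2]) hs0.le
    _ ≤ ∫ ρ in a..b, ρ ^ m / (ρ ^ 2 - a ^ 2) ^ s :=
        integral_mono_interval hac.le hcd hdb
          ((ae_restrict_iff' measurableSet_Ioc).2 (.of_forall fun ρ hρ =>
            kernel_nonneg ha.le hρ.1.le)) hint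

end Kernel

noncomputable def knappSlice (n : ℕ) (s ε t : ℝ) : ℝ :=
  ∫ ρ in √(1 - t ^ 2)..√(ε * (2 - ε)), ρ ^ (n - 2) / (ρ ^ 2 - (1 - t ^ 2)) ^ s

section Slice

variable {n : ℕ} {s ε t : ℝ}

lemma stronglyMeasurable_knappSlice : StronglyMeasurable (knappSlice n s ε) :=
  stronglyMeasurable_intervalIntegral_of_measurable (by fun_prop) (by fun_prop) measurable_const

lemma knappSlice_eq_integral_kernel (ht : t ^ 2 ≤ 1) :
    knappSlice n s ε t = ∫ ρ in √(1 - t ^ 2)..√(ε * (2 - ε)),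
      ρ ^ (n - 2) / (ρ ^ 2 - √(1 - t ^ 2) ^ 2) ^ s := by
  rw [sq_sqrt (by linarith)]
  rfl

lemma knappSlice_nonneg (hε : ε ≤ 1) (ht : t ∈ Ioc (1 - ε) 1) : 0 ≤ knappSlice n s ε t := by
  obtain ⟨ht1, ht2⟩ := ht
  rw [knappSlice_eq_integral_kernel (by nlinarith)]
  exact integral_nonneg (sqrt_le_sqrt (by nlinarith)) fun ρ hρ =>
    kernel_nonneg (sqrt_nonneg _) hρ.1

lemma knappSlice_le (hs0 : 0 < s) (hs1 : s < 1) (hε : ε ≤ 1) (ht : t ∈ Ioo (1 - ε) 1) :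
    knappSlice n s ε t ≤
      √(ε * (2 - ε)) ^ (n - 2) * (1 - t) ^ (-(s / 2)) * (√(ε * (2 - ε)) ^ (1 - s) / (1 - s)) := by
  obtain ⟨ht1, ht2⟩ := ht
  have ha : 0 < √(1 - t ^ 2) := sqrt_pos.2 (by nlinarith)
  have haR : √(1 - t ^ 2) ≤ √(ε * (2 - ε)) := sqrt_le_sqrt (by nlinarith)
  rw [knappSlice_eq_integral_kernel (by nlinarith)]
  refine (integral_kernel_le hs0 hs1 ha haR).trans ?_
  have hsqrt : √(1 - t) ≤ √(1 - t ^ 2) := sqrt_le_sqrt (by nlinarith)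
  have hpow : √(1 - t ^ 2) ^ (-s) ≤ (1 - t) ^ (-(s / 2)) := by
    calc √(1 - t ^ 2) ^ (-s) ≤ √(1 - t) ^ (-s) :=
          rpow_le_rpow_of_nonpos (sqrt_pos.2 (by linarith)) hsqrt (by linarith)
      _ = (1 - t) ^ (-(s / 2)) := by
          rw [sqrt_eq_rpow, ← rpow_mul (by linarith)]
          ring_nf
  gcongr
  exact sub_le_self _ ha.le

lemma le_knappSlice (hs0 : 0 < s) (hs1 : s < 1) (hε0 : 0 < ε) (hε : ε ≤ 1 / 4)
    (ht : t ∈ Ioo (1 - ε / 2) 1) :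
    √ε / 4 * (√ε ^ (n - 2) / ((5 / 4 * √ε) ^ 2) ^ s) ≤ knappSlice n s ε t := by
  obtain ⟨ht1, ht2⟩ := ht
  have ha : 0 < √(1 - t ^ 2) := sqrt_pos.2 (by nlinarith)
  have hac : √(1 - t ^ 2) < √ε := sqrt_lt_sqrt (by nlinarith) (by nlinarith)
  have hdb : 5 / 4 * √ε ≤ √(ε * (2 - ε)) := by
    rw [le_sqrt (by positivity) (by nlinarith), mul_pow, sq_sqrt hε0.le]
    nlinarith
  rw [knappSlice_eq_integral_kernel (by nlinarith)]
  convert le_integral_kernel hs0 hs1 ha hac (by linarith [sqrt_nonneg ε]) hdb using 2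
  ring

lemma intervalIntegrable_knappSlice (hs0 : 0 < s) (hs1 : s < 1) (hε0 : 0 ≤ ε) (hε : ε ≤ 1) :
    IntervalIntegrable (knappSlice n s ε) volume (1 - ε) 1 := by
  have hM := ((intervalIntegrable_rsub_rpow_neg (a := 1 - ε) (b := 1) (s := s / 2)
    (by linarith)).const_mul (√(ε * (2 - ε)) ^ (n - 2))).mul_const
    (√(ε * (2 - ε)) ^ (1 - s) / (1 - s))
  refine hM.mono_fun' stronglyMeasurable_knappSlice.aestronglyMeasurable ?_
  rw [uIoc_of_le (by linarith), ← restrict_Ioo_eq_restrict_Ioc]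
  refine (ae_restrict_iff' measurableSet_Ioo).2 (.of_forall fun t ht => ?_)
  dsimp only
  rw [norm_of_nonneg (knappSlice_nonneg hε (Ioo_subset_Ioc_self ht))]
  exact knappSlice_le hs0 hs1 hε ht

lemma knappG_le (hs0 : 0 < s) (hs1 : s < 1) (hε0 : 0 ≤ ε) (hε : ε ≤ 1) :
    knappG n s ε ≤ √(ε * (2 - ε)) ^ (n - 2) * (√(ε * (2 - ε)) ^ (1 - s) / (1 - s)) *
      (ε ^ (1 - s / 2) / (1 - s / 2)) := by
  have hM := (intervalIntegrable_rsub_rpow_neg (a := 1 - ε) (b := 1) (s := s / 2)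
    (by linarith)).const_mul (√(ε * (2 - ε)) ^ (n - 2))
  calc knappG n s ε ≤ ∫ t in (1 - ε)..1,
        √(ε * (2 - ε)) ^ (n - 2) * (1 - t) ^ (-(s / 2)) * (√(ε * (2 - ε)) ^ (1 - s) / (1 - s)) :=
        integral_mono_on_of_le_Ioo (by linarith) (intervalIntegrable_knappSlice hs0 hs1 hε0 hε)
          (hM.mul_const _) fun t ht => knappSlice_le hs0 hs1 hε ht
    _ = _ := by
        rw [intervalIntegral.integral_mul_const, intervalIntegral.integral_const_mul,
          integral_rsub_rpow_neg (by linarith), sub_sub_cancel]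
        ring

lemma le_knappG (hs0 : 0 < s) (hs1 : s < 1) (hε0 : 0 < ε) (hε : ε ≤ 1 / 4) :
    ε / 2 * (√ε / 4 * (√ε ^ (n - 2) / ((5 / 4 * √ε) ^ 2) ^ s)) ≤ knappG n s ε := by
  have hε1 : ε ≤ 1 := by linarith
  calc ε / 2 * (√ε / 4 * (√ε ^ (n - 2) / ((5 / 4 * √ε) ^ 2) ^ s))
      = ∫ _ in (1 - ε / 2)..1, √ε / 4 * (√ε ^ (n - 2) / ((5 / 4 * √ε) ^ 2) ^ s) := by
        simp only [intervalIntegral.integral_const, sub_sub_cancel, smul_eq_mul]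
    _ ≤ ∫ t in (1 - ε / 2)..1, knappSlice n s ε t :=
        integral_mono_on_of_le_Ioo (by linarith) intervalIntegrable_const
          ((intervalIntegrable_knappSlice hs0 hs1 hε0.le hε1).mono_set
            (by rw [uIcc_of_le (by linarith), uIcc_of_le (by linarith)]; gcongr; linarith))
          fun t ht => le_knappSlice hs0 hs1 hε0 hε ht
    _ ≤ knappG n s ε :=
        integral_mono_interval (by linarith) (by linarith) le_rfl
          ((ae_restrict_iff' measurableSet_Ioc).2 (.of_forall fun t ht => knappSlice_nonneg hε1 ht))
          (intervalIntegrable_knappSlice hs0 hs1 hε0.le hε1)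

lemma le_knappG_rpow (hn : 2 ≤ n) (hs0 : 0 < s) (hs1 : s < 1) (hε0 : 0 < ε) (hε : ε ≤ 1 / 4) :
    (8 * (25 / 16) ^ s)⁻¹ * ε ^ (((n : ℝ) + 1) / 2 - s) ≤ knappG n s ε := by
  refine le_of_eq_of_le ?_ (le_knappG hs0 hs1 hε0 hε)
  obtain ⟨k, rfl⟩ := Nat.exists_eq_add_of_le hn
  have hpow : ε ^ ((((2 + k : ℕ) : ℝ) + 1) / 2) = ε * √ε * √ε ^ k := by
    rw [← Nat.cast_add_one, rpow_eq_sqrt_pow hε0.le]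
    linear_combination √ε ^ (k + 1) * sq_sqrt hε0.le
  rw [rpow_sub hε0, mul_pow, sq_sqrt hε0.le, mul_rpow (by norm_num) hε0.le, hpow,
    Nat.add_sub_cancel_left]
  field_simp
  norm_num

lemma knappG_le_rpow (hn : 2 ≤ n) (hs0 : 0 < s) (hs1 : s < 1) (hε0 : 0 < ε) (hε : ε ≤ 1) :
    knappG n s ε ≤
      √2 ^ (n - 2) * √2 ^ (1 - s) / ((1 - s) * (1 - s / 2)) * ε ^ (((n : ℝ) + 1) / 2 - s) := by
  refine (knappG_le hs0 hs1 hε0.le hε).trans ?_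
  have hR : √(ε * (2 - ε)) ≤ √2 * √ε := by
    rw [← sqrt_mul zero_le_two]
    exact sqrt_le_sqrt (by nlinarith)
  obtain ⟨k, rfl⟩ := Nat.exists_eq_add_of_le hn
  have hexp : ε ^ ((((2 + k : ℕ) : ℝ) + 1) / 2 - s)
      = √ε ^ k * √ε ^ (1 - s) * ε ^ (1 - s / 2) := by
    rw [← rpow_eq_sqrt_pow hε0.le, sqrt_eq_rpow, ← rpow_mul hε0.le, ← rpow_add hε0,
      ← rpow_add hε0]
    push_cast
    ring_nf
  have h1s : 0 < 1 - s := by linarith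
  have h1s2 : 0 < 1 - s / 2 := by linarith
  rw [hexp, Nat.add_sub_cancel_left]
  calc √(ε * (2 - ε)) ^ k * (√(ε * (2 - ε)) ^ (1 - s) / (1 - s)) * (ε ^ (1 - s / 2) / (1 - s / 2))
      ≤ (√2 * √ε) ^ k * ((√2 * √ε) ^ (1 - s) / (1 - s)) * (ε ^ (1 - s / 2) / (1 - s / 2)) := by
        gcongr
    _ = _ := by
        rw [mul_pow, mul_rpow (by positivity) (by positivity)]
        field_simp

end Slice

theorem stmt6 (n : ℕ) (hn : 2 ≤ n) (s : ℝ) (hs : s ∈ Set.Ioo (0 : ℝ) 1) :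
    ∃ c₁ c₂ ε₀ : ℝ, 0 < c₁ ∧ c₁ ≤ c₂ ∧ 0 < ε₀ ∧
      ∀ ε : ℝ, 0 < ε → ε < ε₀ →
        c₁ * ε ^ (((n : ℝ) + 1) / 2 - s) ≤ knappG n s ε ∧
          knappG n s ε ≤ c₂ * ε ^ (((n : ℝ) + 1) / 2 - s) := by
  obtain ⟨hs0, hs1⟩ := hs
  set c₁ : ℝ := (8 * (25 / 16) ^ s)⁻¹
  set c₂ : ℝ := √2 ^ (n - 2) * √2 ^ (1 - s) / ((1 - s) * (1 - s / 2))
  refine ⟨c₁, max c₁ c₂, 1 / 4, by positivity, le_max_left _ _, by norm_num,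
    fun ε hε0 hε => ⟨le_knappG_rpow hn hs0 hs1 hε0 hε.le, ?_⟩⟩
  calc knappG n s ε ≤ c₂ * ε ^ (((n : ℝ) + 1) / 2 - s) :=
        knappG_le_rpow hn hs0 hs1 hε0 (by linarith)
    _ ≤ max c₁ c₂ * ε ^ (((n : ℝ) + 1) / 2 - s) := by gcongr; exact le_max_right _ _
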